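/- Let ζ_m ~ Gamma(m,1/m) and let φ:(0,∞)→ℝ be twice continuously differentiable with all relevant moments finite. Then σ²_{φ,m} = [m Var(ζ_m φ'(ζ_m)) + (2m+1) μ²_{φ,m} - 2m μ_{φ,m} E(ζ_m² φ'(ζ_m))] / [E(ζ_m² φ''(ζ_m))]² ≥ 1, where μ_{φ,m} = E(ζ_m φ'(ζ_m)), provided E(ζ_m² φ''(ζ_m)) ≠ 0. -/

import Mathlib

/-!
Write `g(x) = x φ'(x)`, `μ = E g(ζ)` and `κ = Cov(ζ, g(ζ))`. Stein's identity for the gamma law,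
`E[ζ ψ'(ζ)] = m E[(ζ - 1) ψ(ζ)]`, applied to `ψ = g` gives `E[ζ² φ''(ζ)] = m κ - μ`. Substituting
this, the numerator minus `E[ζ² φ''(ζ)]²` equals `m (Var g(ζ) - m κ²)`, which is nonnegative by
Cauchy–Schwarz since `Var ζ = 1/m`.
-/

open MeasureTheory ProbabilityTheory Real Set

theorem ContDiffOn.hasDerivAt_mul_deriv {φ : ℝ → ℝ} {s : Set ℝ} (hφ : ContDiffOn ℝ 2 φ s)
    (hs : IsOpen s) {x : ℝ} (hx : x ∈ s) :
    HasDerivAt (fun y => y * deriv φ y) (deriv φ x + x * deriv (deriv φ) x) x := by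
  have hφ' : ContDiffOn ℝ 1 (deriv φ) s := hφ.deriv_of_isOpen hs (by norm_num)
  exact ((hasDerivAt_id' x).mul ((hφ'.differentiableOn one_ne_zero).differentiableAt
    (hs.mem_nhds hx)).hasDerivAt).congr_deriv (by rw [one_mul])

section ExpSubstitution

variable {E : Type*} [NormedAddCommGroup E] [NormedSpace ℝ E]

theorem integral_Ioi_zero_eq_integral_comp_exp (g : ℝ → E) :
    ∫ x in Ioi 0, g x = ∫ t, exp t • g (exp t) := by
  simpa [range_exp, abs_of_pos (exp_pos _)] using
    integral_image_eq_integral_abs_deriv_smul MeasurableSet.univ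
      (fun x _ => (hasDerivAt_exp x).hasDerivWithinAt) exp_injective.injOn g

theorem integrableOn_Ioi_zero_iff_integrable_comp_exp (g : ℝ → E) :
    IntegrableOn g (Ioi 0) ↔ Integrable (fun t => exp t • g (exp t)) := by
  simpa [range_exp, abs_of_pos (exp_pos _)] using
    integrableOn_image_iff_integrableOn_abs_deriv_smul MeasurableSet.univ
      (fun x _ => (hasDerivAt_exp x).hasDerivWithinAt) exp_injective.injOn g

/-- The substitution `x = exp t` moves the problem to the whole line, where integrability of
`u ∘ exp` (i.e. of `u x / x` on `(0, ∞)`) forces the boundary terms to vanish. -/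
theorem integral_Ioi_zero_of_hasDerivAt_of_integrableOn_inv_smul [CompleteSpace E]
    {u u' : ℝ → E} (hderiv : ∀ x ∈ Ioi (0 : ℝ), HasDerivAt u (u' x) x)
    (hu' : IntegrableOn u' (Ioi 0)) (hu : IntegrableOn (fun x => x⁻¹ • u x) (Ioi 0)) :
    ∫ x in Ioi 0, u' x = 0 := by
  have hcomp : ∀ t, HasDerivAt (u ∘ exp) (exp t • u' (exp t)) t := fun t =>
    (hderiv _ (exp_pos t)).scomp t (hasDerivAt_exp t)
  have hu_exp : Integrable (u ∘ exp) := by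
    refine ((integrableOn_Ioi_zero_iff_integrable_comp_exp _).mp hu).congr
      (Filter.Eventually.of_forall fun t => ?_)
    simp [smul_smul, (exp_pos t).ne']
  rw [integral_Ioi_zero_eq_integral_comp_exp]
  exact integral_eq_zero_of_hasDerivAt_of_integrable hcomp
    ((integrableOn_Ioi_zero_iff_integrable_comp_exp _).mp hu') hu_exp

end ExpSubstitution

namespace ProbabilityTheory

variable {a r : ℝ}

lemma gammaPDFReal_of_pos {x : ℝ} (hx : 0 < x) :
    gammaPDFReal a r x = r ^ a / Gamma a * x ^ (a - 1) * exp (-(r * x)) :=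
  if_pos hx.le

lemma gammaMeasure_eq_withDensity_toNNReal (a r : ℝ) :
    gammaMeasure a r = volume.withDensity (fun x => (gammaPDFReal a r x).toNNReal) :=
  rfl

lemma hasDerivAt_mul_gammaPDFReal {x : ℝ} (hx : 0 < x) :
    HasDerivAt (fun y => y * gammaPDFReal a r y) ((a - r * x) * gammaPDFReal a r x) x := by
  have hev : (fun y => y * gammaPDFReal a r y)
      =ᶠ[nhds x] fun y => r ^ a / Gamma a * (y ^ a * exp (-(r * y))) := by
    filter_upwards [Ioi_mem_nhds hx] with y (hy : 0 < y)
    rw [gammaPDFReal_of_pos hy, rpow_sub_one hy.ne']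
    field_simp
  have hexp : HasDerivAt (fun y => exp (-(r * y))) (exp (-(r * x)) * -r) x := by
    simpa using ((hasDerivAt_id x).const_mul r).neg.exp
  have hd := ((hasDerivAt_rpow_const (p := a) (Or.inl hx.ne')).mul hexp).const_mul
    (r ^ a / Gamma a)
  refine (hd.congr_of_eventuallyEq hev).congr_deriv ?_
  rw [gammaPDFReal_of_pos hx, rpow_sub_one hx.ne']
  field_simp
  ring

lemma rpow_mul_gammaPDFReal_eqOn (p : ℝ) :
    EqOn (fun x => x ^ p * gammaPDFReal a r x)
      (fun x => r ^ a / Gamma a * (x ^ (a + p - 1) * exp (-(r * x)))) (Ioi 0) := by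
  intro x hx
  simp only [gammaPDFReal_of_pos hx, show a + p - 1 = p + (a - 1) by ring,
    rpow_add (mem_Ioi.1 hx)]
  ring

section

variable (ha : 0 < a) (hr : 0 < r)
include ha hr

lemma toNNReal_gammaPDFReal_smul_ae_eq (g : ℝ → ℝ) :
    (fun x => (gammaPDFReal a r x).toNNReal • g x)
      =ᵐ[volume] (Ioi 0).indicator (fun x => g x * gammaPDFReal a r x) := by
  filter_upwards [Measure.ae_ne volume 0] with x hx
  rcases hx.lt_or_gt with hx | hx
  · rw [indicator_of_notMem (s := Ioi 0) (not_lt.2 hx.le)]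
    simp [gammaPDFReal, if_neg (not_le.2 hx)]
  · rw [indicator_of_mem (mem_Ioi.2 hx), NNReal.smul_def,
      Real.coe_toNNReal _ (gammaPDFReal_nonneg ha hr x), smul_eq_mul, mul_comm]

lemma integral_gammaMeasure (g : ℝ → ℝ) :
    ∫ x, g x ∂gammaMeasure a r = ∫ x in Ioi 0, g x * gammaPDFReal a r x := by
  rw [gammaMeasure_eq_withDensity_toNNReal,
    integral_withDensity_eq_integral_smul (measurable_gammaPDFReal a r).real_toNNReal,
    integral_congr_ae (toNNReal_gammaPDFReal_smul_ae_eq ha hr g),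
    integral_indicator measurableSet_Ioi]

lemma integrable_gammaMeasure_iff (g : ℝ → ℝ) :
    Integrable g (gammaMeasure a r) ↔
      IntegrableOn (fun x => g x * gammaPDFReal a r x) (Ioi 0) := by
  rw [gammaMeasure_eq_withDensity_toNNReal,
    integrable_withDensity_iff_integrable_smul (measurable_gammaPDFReal a r).real_toNNReal,
    integrable_congr (toNNReal_gammaPDFReal_smul_ae_eq ha hr g),
    integrable_indicator_iff measurableSet_Ioi]

lemma integrable_rpow_gammaMeasure {p : ℝ} (hp : 0 < a + p) : Integrable (fun x => x ^ p) (gammaMeasure a r) := by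
  rw [integrable_gammaMeasure_iff ha hr]
  refine IntegrableOn.congr_fun ?_ (rpow_mul_gammaPDFReal_eqOn p).symm measurableSet_Ioi
  have hs : -1 < a + p - 1 := by linarith
  have h := integrableOn_rpow_mul_exp_neg_mul_rpow hs zero_lt_one hr
  simp only [rpow_one, neg_mul] at h
  exact h.const_mul _

lemma integral_rpow_gammaMeasure {p : ℝ} (hp : 0 < a + p) :
    ∫ x, x ^ p ∂gammaMeasure a r = Gamma (a + p) / (Gamma a * r ^ p) := by
  rw [integral_gammaMeasure ha hr, setIntegral_congr_fun measurableSet_Ioi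
    (rpow_mul_gammaPDFReal_eqOn p), integral_const_mul,
    integral_rpow_mul_exp_neg_mul_Ioi (by linarith) hr, div_rpow zero_le_one hr.le, one_rpow,
    rpow_add hr]
  have := (Gamma_pos_of_pos ha).ne'
  have := (rpow_pos_of_pos hr a).ne'
  have := (rpow_pos_of_pos hr p).ne'
  field_simp

lemma integral_id_gammaMeasure : ∫ x, x ∂gammaMeasure a r = a / r := by
  have h := integral_rpow_gammaMeasure ha hr (p := 1) (by linarith)
  simp only [rpow_one, Gamma_add_one ha.ne'] at h
  rw [h]
  field_simp [(Gamma_pos_of_pos ha).ne']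

lemma integral_sq_gammaMeasure : ∫ x, x ^ 2 ∂gammaMeasure a r = a * (a + 1) / r ^ 2 := by
  have h := integral_rpow_gammaMeasure ha hr (p := 2) (by linarith)
  simp only [rpow_two, show a + 2 = a + 1 + 1 by ring, Gamma_add_one (by linarith : a + 1 ≠ 0),
    Gamma_add_one ha.ne'] at h
  rw [h]
  field_simp [(Gamma_pos_of_pos ha).ne']

lemma memLp_id_gammaMeasure : MemLp (fun x => x) 2 (gammaMeasure a r) :=
  (memLp_two_iff_integrable_sq measurable_id.aestronglyMeasurable).2 (by
    simpa only [rpow_two, id] using integrable_rpow_gammaMeasure ha hr (p := 2) (by linarith))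

lemma variance_id_gammaMeasure : Var[fun x => x; gammaMeasure a r] = a / r ^ 2 := by
  have := isProbabilityMeasure_gammaMeasure ha hr
  rw [variance_eq_sub (memLp_id_gammaMeasure ha hr)]
  simp only [Pi.pow_apply, integral_sq_gammaMeasure ha hr, integral_id_gammaMeasure ha hr]
  field_simp
  ring

/-- Stein's identity for the gamma distribution, by integration by parts against the density `p`:
`(x p(x))' = (a - r x) p(x)`. -/
theorem integral_mul_deriv_gammaMeasure {ψ ψ' : ℝ → ℝ}
    (hψ : ∀ x ∈ Ioi (0 : ℝ), HasDerivAt ψ (ψ' x) x)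
    (hxψ' : Integrable (fun x => x * ψ' x) (gammaMeasure a r))
    (hψ_int : Integrable ψ (gammaMeasure a r))
    (hxψ : Integrable (fun x => x * ψ x) (gammaMeasure a r)) :
    ∫ x, x * ψ' x ∂gammaMeasure a r
      = r * ∫ x, x * ψ x ∂gammaMeasure a r - a * ∫ x, ψ x ∂gammaMeasure a r := by
  have hsum₁ : Integrable (fun x => x * ψ' x + a * ψ x) (gammaMeasure a r) :=
    hxψ'.add (hψ_int.const_mul a)
  have hsum : Integrable (fun x => x * ψ' x + a * ψ x - r * (x * ψ x)) (gammaMeasure a r) :=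
    hsum₁.sub (hxψ.const_mul r)
  have hderiv : ∀ x ∈ Ioi (0 : ℝ), HasDerivAt (fun y => ψ y * (y * gammaPDFReal a r y))
      ((x * ψ' x + a * ψ x - r * (x * ψ x)) * gammaPDFReal a r x) x := fun x hx =>
    ((hψ x hx).mul (hasDerivAt_mul_gammaPDFReal hx)).congr_deriv (by ring)
  have hzero : ∫ x, (x * ψ' x + a * ψ x - r * (x * ψ x)) ∂gammaMeasure a r = 0 := by
    rw [integral_gammaMeasure ha hr]
    refine integral_Ioi_zero_of_hasDerivAt_of_integrableOn_inv_smul hderiv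
      ((integrable_gammaMeasure_iff ha hr _).1 hsum) ?_
    refine ((integrable_gammaMeasure_iff ha hr _).1 hψ_int).congr_fun (fun x hx => ?_)
      measurableSet_Ioi
    rw [smul_eq_mul]
    field_simp [(mem_Ioi.1 hx).ne']
  rw [integral_sub hsum₁ (hxψ.const_mul r), integral_add hxψ' (hψ_int.const_mul a),
    integral_const_mul, integral_const_mul] at hzero
  linarith

end

theorem covariance_sq_le_variance_mul_variance {Ω : Type*} [MeasurableSpace Ω] {μ : Measure Ω}
    [IsFiniteMeasure μ] {X Y : Ω → ℝ} (hX : MemLp X 2 μ) (hY : MemLp Y 2 μ) :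
    cov[X, Y; μ] ^ 2 ≤ Var[X; μ] * Var[Y; μ] := by
  have hquad : ∀ t : ℝ, 0 ≤ Var[X; μ] * (t * t) + 2 * cov[X, Y; μ] * t + Var[Y; μ] := by
    intro t
    have h := variance_nonneg (t • X + Y) μ
    rw [variance_add (hX.const_smul t) hY, variance_smul, covariance_smul_left] at h
    linarith
  have h := discrim_le_zero hquad
  rw [discrim] at h
  linarith

end ProbabilityTheory

/-- For `ζ_m ~ Gamma(m, 1/m)` (rate `m`) and twice continuously differentiable
`φ : (0,∞) → ℝ` with all the relevant moments finite and `E(ζ²φ''(ζ)) ≠ 0`, the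
asymptotic variance factor
`σ²_{φ,m} = [m Var(ζφ'(ζ)) + (2m+1) μ² - 2m μ E(ζ²φ'(ζ))] / [E(ζ²φ''(ζ))]²`
(with `μ = E(ζφ'(ζ))`) is at least 1. -/
theorem sigma_sq_ge_one
    (m : ℕ) (hm : 0 < m) (φ : ℝ → ℝ)
    (hφ : ContDiffOn ℝ 2 φ (Set.Ioi 0))
    (h1 : MemLp (fun x => x * deriv φ x) 2 (gammaMeasure m m))
    (h2 : Integrable (fun x => x ^ 2 * deriv φ x) (gammaMeasure m m))
    (h3 : Integrable (fun x => x ^ 2 * deriv (deriv φ) x) (gammaMeasure m m))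
    (hne : (∫ x, x ^ 2 * deriv (deriv φ) x ∂(gammaMeasure m m)) ≠ 0) :
    1 ≤ ((m : ℝ) * variance (fun x => x * deriv φ x) (gammaMeasure m m)
        + (2 * (m : ℝ) + 1) * (∫ x, x * deriv φ x ∂(gammaMeasure m m)) ^ 2
        - 2 * (m : ℝ) * (∫ x, x * deriv φ x ∂(gammaMeasure m m))
            * (∫ x, x ^ 2 * deriv φ x ∂(gammaMeasure m m)))
      / (∫ x, x ^ 2 * deriv (deriv φ) x ∂(gammaMeasure m m)) ^ 2 := by
  have hm₀ : (0 : ℝ) < m := by exact_mod_cast hm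
  have := isProbabilityMeasure_gammaMeasure hm₀ hm₀
  set γ := gammaMeasure (m : ℝ) m
  set g : ℝ → ℝ := fun x => x * deriv φ x
  set μ := ∫ x, g x ∂γ
  set A := ∫ x, x ^ 2 * deriv φ x ∂γ
  set D := ∫ x, x ^ 2 * deriv (deriv φ) x ∂γ
  have hxg : (fun x => x * g x) = fun x => x ^ 2 * deriv φ x := funext fun x => by ring
  have hg_int : Integrable g γ := h1.integrable one_le_two
  have hstein : μ + D = m * A - m * μ := by
    have hxg' : (fun x => x * (deriv φ x + x * deriv (deriv φ) x))
        = fun x => g x + x ^ 2 * deriv (deriv φ) x := funext fun x => by ring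
    have h := integral_mul_deriv_gammaMeasure hm₀ hm₀
      (fun x hx => hφ.hasDerivAt_mul_deriv isOpen_Ioi hx) (hxg' ▸ hg_int.add h3) hg_int
      (hxg ▸ h2)
    rwa [hxg', hxg, integral_add hg_int h3] at h
  have hcov : cov[fun x => x, g; γ] = A - μ := by
    rw [covariance_eq_sub (memLp_id_gammaMeasure hm₀ hm₀) h1, integral_id_gammaMeasure hm₀ hm₀,
      div_self hm₀.ne', one_mul]
    change ∫ x, x * g x ∂γ - μ = A - μ
    rw [hxg]
  have hcs := covariance_sq_le_variance_mul_variance (memLp_id_gammaMeasure hm₀ hm₀) h1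
  rw [hcov, variance_id_gammaMeasure hm₀ hm₀] at hcs
  have hcs' : (m : ℝ) ^ 2 * (A - μ) ^ 2 ≤ m * variance g γ := by
    calc (m : ℝ) ^ 2 * (A - μ) ^ 2 ≤ m ^ 2 * (m / m ^ 2 * variance g γ) := by gcongr
      _ = m * variance g γ := by field_simp
  rw [le_div_iff₀ (by positivity), one_mul]
  linear_combination hcs' + (D + m * (A - μ) - μ) * hstein
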